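/- arXiv:1607.00852 — 5 statements merged into one kernel-verified Lean document; each statement's English description precedes it below -/
import Mathlib

section
/- Let ζ ∈ S² and define V : ℝ³∖{0} → ℝ by V(x) = (1/(4π))·log(1 − (x·ζ)/‖x‖). Then for every x ∈ ℝ³ with x ≠ 0 and x/‖x‖ ≠ ζ, V is twice continuously differentiable on a neighborhood of x and its Euclidean Laplacian satisfies ΔV(x) = −1/(4π‖x‖²). (This is the degree-zero homogeneous encoding of the defining property Δ*_η G(ξ·η) = −1/(4π), η ≠ ξ, of the fundamental solution for the Beltrami operator, using Δ(U(x/‖x‖)) = ‖x‖⁻²·(Δ*U)(x/‖x‖).) -/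
/-!
Away from the ray through `ζ`, `V = (1/4π) (log (‖y‖ - ⟪y, ζ⟫) - log ‖y‖)`. By the chain rule
`Δ (log ∘ g) = (g Δg - |∇g|²) / g²`. For `g y = ‖y‖ - ⟪y, ζ⟫` one has `Δg = 2/‖y‖` and
`|∇g|² = |y/‖y‖ - ζ|² = 2g/‖y‖`, so `log g` is harmonic, while `Δ log ‖y‖ = 1/‖y‖²` in `ℝ³`.
-/

open MeasureTheory Real
open scoped RealInnerProductSpace

noncomputable section

/-- ℝ³ as Euclidean space. -/
abbrev E3 : Type := EuclideanSpace ℝ (Fin 3)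

/-- The coordinate Laplacian of a function u : ℝ³ → ℝ. -/
def lap (u : E3 → ℝ) (x : E3) : ℝ :=
  ∑ i : Fin 3, fderiv ℝ (fun y => fderiv ℝ u y (EuclideanSpace.single i 1)) x
    (EuclideanSpace.single i 1)

open Filter Topology

section SecondDirectionalDerivative

variable {E : Type*} [NormedAddCommGroup E] [NormedSpace ℝ E] {g : E → ℝ} {x v : E}

theorem ContDiffAt.differentiableAt_fderiv_apply (hg : ContDiffAt ℝ 2 g x) (v : E) :
    DifferentiableAt ℝ (fun y => fderiv ℝ g y v) x :=
  ((hg.fderiv_right (m := 1) le_rfl).differentiableAt one_ne_zero).clm_apply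
    (differentiableAt_const v)

theorem ContDiffAt.eventually_differentiableAt (hg : ContDiffAt ℝ 2 g x) :
    ∀ᶠ y in 𝓝 x, DifferentiableAt ℝ g y :=
  (hg.eventually (by simp)).mono fun _ hy => hy.differentiableAt two_ne_zero

theorem fderiv_const_mul_apply (c : ℝ) (φ : E → ℝ) :
    fderiv ℝ (fun y => c * φ y) x v = c * fderiv ℝ φ x v := by
  rw [show (fun y => c * φ y) = c • φ from rfl, fderiv_const_smul_field]
  rfl

theorem fderiv_fderiv_apply_sub {u w : E → ℝ} (hu : ContDiffAt ℝ 2 u x)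
    (hw : ContDiffAt ℝ 2 w x) :
    fderiv ℝ (fun y => fderiv ℝ (fun z => u z - w z) y v) x v =
      fderiv ℝ (fun y => fderiv ℝ u y v) x v - fderiv ℝ (fun y => fderiv ℝ w y v) x v := by
  have h : (fun y => fderiv ℝ (fun z => u z - w z) y v) =ᶠ[𝓝 x]
      fun y => fderiv ℝ u y v - fderiv ℝ w y v := by
    filter_upwards [hu.eventually_differentiableAt, hw.eventually_differentiableAt]
      with y hu hw
    rw [fderiv_fun_sub hu hw, sub_apply]
  rw [h.fderiv_eq, fderiv_fun_sub (hu.differentiableAt_fderiv_apply v)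
    (hw.differentiableAt_fderiv_apply v), sub_apply]

theorem fderiv_fderiv_apply_comp {f f' : ℝ → ℝ} {f'' : ℝ}
    (hf : ∀ᶠ t in 𝓝 (g x), HasDerivAt f (f' t) t) (hf' : HasDerivAt f' f'' (g x))
    (hg : ContDiffAt ℝ 2 g x) :
    fderiv ℝ (fun y => fderiv ℝ (fun z => f (g z)) y v) x v =
      f'' * fderiv ℝ g x v ^ 2 + f' (g x) * fderiv ℝ (fun y => fderiv ℝ g y v) x v := by
  have h : (fun y => fderiv ℝ (fun z => f (g z)) y v) =ᶠ[𝓝 x]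
      fun y => f' (g y) * fderiv ℝ g y v := by
    filter_upwards [hg.eventually_differentiableAt, hg.continuousAt.eventually hf]
      with y hgy hfy
    change fderiv ℝ (f ∘ g) y v = _
    rw [(hfy.comp_hasFDerivAt y hgy.hasFDerivAt).fderiv]
    simp only [smul_apply, smul_eq_mul]
  have hprod : HasFDerivAt (fun y => f' (g y) * fderiv ℝ g y v) _ x :=
    (hf'.comp_hasFDerivAt x (hg.differentiableAt two_ne_zero).hasFDerivAt).mul
      (hg.differentiableAt_fderiv_apply v).hasFDerivAt
  rw [h.fderiv_eq, hprod.fderiv]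
  simp only [Function.comp_apply, add_apply, smul_apply, smul_eq_mul]
  ring

end SecondDirectionalDerivative

section InnerProductSpace

variable {F : Type*} [NormedAddCommGroup F] [InnerProductSpace ℝ F] {x : F}

theorem hasFDerivAt_norm (hx : x ≠ 0) :
    HasFDerivAt (fun y : F => ‖y‖) (innerSL ℝ (‖x‖⁻¹ • x)) x := by
  have h := (hasStrictFDerivAt_norm_sq x).hasFDerivAt.sqrt (by positivity)
  simp only [sqrt_sq (norm_nonneg _)] at h
  convert h using 1
  ext v
  simp only [map_smul, smul_apply, coe_innerSL_apply, smul_eq_mul, one_div, mul_inv_rev,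
    nsmul_eq_mul, Nat.cast_ofNat]
  field_simp

theorem fderiv_fderiv_norm_apply (hx : x ≠ 0) (v : F) :
    fderiv ℝ (fun y => fderiv ℝ (fun z : F => ‖z‖) y v) x v =
      (‖v‖ ^ 2 - (⟪x, v⟫ / ‖x‖) ^ 2) / ‖x‖ := by
  have h : (fun y => fderiv ℝ (fun z : F => ‖z‖) y v) =ᶠ[𝓝 x]
      fun y => ‖y‖⁻¹ * ⟪y, v⟫ := by
    filter_upwards [isOpen_ne.mem_nhds hx] with y hy
    simp [(hasFDerivAt_norm hy).fderiv]
  have hinv := (hasDerivAt_inv (norm_ne_zero_iff.2 hx)).comp_hasFDerivAt x (hasFDerivAt_norm hx)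
  have hprod : HasFDerivAt (fun y => ‖y‖⁻¹ * ⟪y, v⟫) _ x :=
    hinv.mul ((hasFDerivAt_id x).inner ℝ (hasFDerivAt_const v x))
  rw [h.fderiv_eq, hprod.fderiv]
  simp only [Function.comp_apply, id_eq, map_smul, neg_smul, smul_neg, add_apply, smul_apply,
    ContinuousLinearMap.comp_apply, ContinuousLinearMap.prod_apply, ContinuousLinearMap.id_apply,
    zero_apply, fderivInnerCLM_apply, inner_zero_right, inner_self_eq_norm_sq_to_K, ringHom_apply,
    zero_add, smul_eq_mul, neg_apply, coe_innerSL_apply]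
  field_simp
  ring

theorem hasFDerivAt_norm_sub_inner (hx : x ≠ 0) (ζ : F) :
    HasFDerivAt (fun y => ‖y‖ - ⟪y, ζ⟫) (innerSL ℝ (‖x‖⁻¹ • x - ζ)) x := by
  rw [map_sub]
  refine (hasFDerivAt_norm hx).sub ?_
  simp_rw [real_inner_comm ζ]
  exact (innerSL ℝ ζ).hasFDerivAt

theorem norm_inv_norm_smul_sub_sq {ζ : F} (hζ : ‖ζ‖ = 1) (hx : x ≠ 0) :
    ‖‖x‖⁻¹ • x - ζ‖ ^ 2 = 2 * (‖x‖ - ⟪x, ζ⟫) / ‖x‖ := by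
  rw [norm_sub_sq_real, norm_smul, real_inner_smul_left, hζ]
  simp only [norm_inv, norm_norm, one_pow]
  field_simp
  ring

theorem inner_lt_norm_of_inv_norm_smul_ne {ζ : F} (hζ : ‖ζ‖ = 1) (hx : x ≠ 0)
    (h : ‖x‖⁻¹ • x ≠ ζ) : ⟪x, ζ⟫ < ‖x‖ := by
  have := (inner_lt_norm_mul_iff_real (x := x) (y := ζ)).2
  rw [hζ, mul_one, one_smul] at this
  refine this fun hxζ => h ?_
  nth_rw 2 [hxζ]
  rw [smul_smul, inv_mul_cancel₀ (norm_ne_zero_iff.2 hx), one_smul]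

end InnerProductSpace

section Laplacian

variable {u w : E3 → ℝ} {x : E3}

theorem lap_congr (h : u =ᶠ[𝓝 x] w) : lap u x = lap w x := by
  refine Finset.sum_congr rfl fun i _ => ?_
  rw [EventuallyEq.fderiv_eq (f := fun y => fderiv ℝ w y (EuclideanSpace.single i 1))]
  filter_upwards [h.fderiv (𝕜 := ℝ)] with y hy
  rw [hy]

theorem lap_const_mul (c : ℝ) : lap (fun y => c * u y) x = c * lap u x := by
  simp only [lap, fderiv_const_mul_apply, Finset.mul_sum]

theorem lap_sub (hu : ContDiffAt ℝ 2 u x) (hw : ContDiffAt ℝ 2 w x) :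
    lap (fun y => u y - w y) x = lap u x - lap w x := by
  simp only [lap, fderiv_fderiv_apply_sub hu hw, Finset.sum_sub_distrib]

theorem lap_comp {f f' : ℝ → ℝ} {f'' : ℝ} {g : E3 → ℝ} {a : E3}
    (hf : ∀ᶠ t in 𝓝 (g x), HasDerivAt f (f' t) t) (hf' : HasDerivAt f' f'' (g x))
    (hg : ContDiffAt ℝ 2 g x) (hga : HasFDerivAt g (innerSL ℝ a) x) :
    lap (fun y => f (g y)) x = f'' * ‖a‖ ^ 2 + f' (g x) * lap g x := by
  simp only [lap, fderiv_fderiv_apply_comp hf hf' hg, Finset.sum_add_distrib, ← Finset.mul_sum,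
    hga.fderiv, innerSL_apply_apply, EuclideanSpace.inner_single_right,
    EuclideanSpace.real_norm_sq_eq]
  simp

theorem lap_norm (hx : x ≠ 0) : lap (fun y => ‖y‖) x = 2 / ‖x‖ := by
  simp only [lap, fderiv_fderiv_norm_apply hx, PiLp.norm_single,
    EuclideanSpace.inner_single_right, norm_one, one_mul, conj_trivial]
  rw [← Finset.sum_div, Finset.sum_sub_distrib]
  simp_rw [div_pow, ← Finset.sum_div, ← EuclideanSpace.real_norm_sq_eq]
  field_simp
  norm_num

theorem lap_inner_const (ζ : E3) : lap (fun y => ⟪y, ζ⟫) x = 0 := by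
  simp_rw [real_inner_comm ζ]
  simp only [lap, ← coe_innerSL_apply, ContinuousLinearMap.fderiv, fderiv_fun_const, Pi.zero_apply,
    zero_apply, Finset.sum_const_zero]

theorem lap_log_norm (hx : x ≠ 0) : lap (fun y => log ‖y‖) x = 1 / ‖x‖ ^ 2 := by
  have hr : ‖x‖ ≠ 0 := norm_ne_zero_iff.2 hx
  have hlog : ∀ᶠ t in 𝓝 ‖x‖, HasDerivAt log t⁻¹ t :=
    (eventually_ne_nhds hr).mono fun t ht => hasDerivAt_log ht
  rw [lap_comp hlog (hasDerivAt_inv hr) (contDiffAt_norm ℝ hx) (hasFDerivAt_norm hx),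
    lap_norm hx, norm_smul, norm_inv, norm_norm, inv_mul_cancel₀ hr]
  field_simp
  ring

theorem lap_log_norm_sub_inner {ζ : E3} (hζ : ‖ζ‖ = 1) (hx : ⟪x, ζ⟫ < ‖x‖) :
    lap (fun y => log (‖y‖ - ⟪y, ζ⟫)) x = 0 := by
  have hx0 : x ≠ 0 := by
    rintro rfl
    simp at hx
  have hinner : ContDiffAt ℝ 2 (fun y : E3 => ⟪y, ζ⟫) x := contDiffAt_id.inner ℝ contDiffAt_const
  have hlap : lap (fun y => ‖y‖ - ⟪y, ζ⟫) x = 2 / ‖x‖ := by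
    rw [lap_sub (contDiffAt_norm ℝ hx0) hinner, lap_norm hx0, lap_inner_const, sub_zero]
  have hlog : ∀ᶠ t in 𝓝 (‖x‖ - ⟪x, ζ⟫), HasDerivAt log t⁻¹ t :=
    (eventually_ne_nhds (sub_pos.2 hx).ne').mono fun t ht => hasDerivAt_log ht
  rw [lap_comp hlog (hasDerivAt_inv (sub_pos.2 hx).ne') ((contDiffAt_norm ℝ hx0).sub hinner)
    (hasFDerivAt_norm_sub_inner hx0 ζ), hlap, norm_inv_norm_smul_sub_sq hζ hx0]
  field_simp
  ring

end Laplacian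

/-- the degree-zero homogeneous encoding of the defining property
Δ*_η G(ξ·η) = −1/(4π) of the fundamental solution for the Beltrami operator. -/
theorem fundSol_beltrami (ζ : E3) (hζ : ζ ∈ Metric.sphere (0 : E3) 1)
    (V : E3 → ℝ) (hV : ∀ x : E3, V x = (1 / (4 * π)) * Real.log (1 - ⟪x, ζ⟫ / ‖x‖))
    (x : E3) (hx : x ≠ 0) (hxζ : ‖x‖⁻¹ • x ≠ ζ) :
    ContDiffAt ℝ 2 V x ∧ lap V x = -(1 / (4 * π * ‖x‖ ^ 2)) := by
  have hζ1 : ‖ζ‖ = 1 := mem_sphere_zero_iff_norm.1 hζ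
  have hxζ' : ⟪x, ζ⟫ < ‖x‖ := inner_lt_norm_of_inv_norm_smul_ne hζ1 hx hxζ
  have hVeq : V =ᶠ[𝓝 x] fun y => 1 / (4 * π) * (log (‖y‖ - ⟪y, ζ⟫) - log ‖y‖) := by
    have hopen : ∀ᶠ y in 𝓝 x, 0 < ‖y‖ - ⟪y, ζ⟫ :=
      (continuous_norm.sub (continuous_id.inner continuous_const)).continuousAt.eventually
        (lt_mem_nhds (sub_pos.2 hxζ'))
    filter_upwards [hopen] with y hy
    have hy0 : ‖y‖ ≠ 0 := by
      rintro hy0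
      simp [norm_eq_zero.1 hy0] at hy
    rw [hV, ← log_div hy.ne' hy0, sub_div, div_self hy0]
  have hlogg : ContDiffAt ℝ 2 (fun y => log (‖y‖ - ⟪y, ζ⟫)) x :=
    ((contDiffAt_norm ℝ hx).sub (contDiffAt_id.inner ℝ contDiffAt_const)).log (sub_pos.2 hxζ').ne'
  have hlogr : ContDiffAt ℝ 2 (fun y => log ‖y‖) x :=
    (contDiffAt_norm ℝ hx).log (norm_ne_zero_iff.2 hx)
  refine ⟨(contDiffAt_const.mul (hlogg.sub hlogr)).congr_of_eventuallyEq hVeq, ?_⟩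
  rw [lap_congr hVeq, lap_const_mul, lap_sub hlogg hlogr, lap_log_norm_sub_inner hζ1 hxζ',
    lap_log_norm hx]
  field_simp
  ring
end
end

section
/- Reflection point for a spherical cap: Let ζ ∈ S², ρ ∈ (0,2) with ρ ≠ 1, and let ξ ∈ S² satisfy 1 − ξ·ζ < ρ (ξ lies in the open cap Γ_ρ(ζ)). Let ř and ξ̌ be the scaling factor and reflection point of ξ. Then: (a) ř > 0; (b) ‖ξ̌‖ = 1, so ξ̌ ∈ S²; (c) 1 − ξ̌·ζ > ρ, i.e. ξ̌ lies outside the closed cap; and (d) for every η ∈ S² with ζ·η = 1 − ρ one has 1 − ξ·η = ř·(1 − ξ̌·η). Consequently, the Dirichlet Green function for the cap, G_D(ξ,η) = (1/(4π))·log(1 − ξ·η) − (1/(4π))·log(ř·(1 − ξ̌·η)), vanishes for every η on the boundary circle of Γ_ρ(ζ). -/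
open Real
open scoped RealInnerProductSpace

noncomputable section

/-- The scaling factor of the spherical reflection (Kelvin) point of ξ relative to the
spherical cap Γ_ρ(ζ). -/
def scalFact (ζ ξ : E3) (ρ : ℝ) : ℝ :=
  -((1 + 2 * ⟪ξ, ζ⟫ * (ρ - 1) + (ρ - 1) ^ 2) / (ρ * (ρ - 2)))

/-- The spherical reflection (Kelvin) point of ξ relative to the spherical cap Γ_ρ(ζ). -/
def reflPt (ζ ξ : E3) (ρ : ℝ) : E3 :=
  (scalFact ζ ξ ρ)⁻¹ • ξ - ((scalFact ζ ξ ρ - 1) / (scalFact ζ ξ ρ * (ρ - 1))) • ζ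

/-- Reflection point for a spherical cap. -/
theorem reflection_point_cap (ζ : E3) (hζ : ζ ∈ Metric.sphere (0 : E3) 1)
    (ρ : ℝ) (hρ0 : 0 < ρ) (hρ2 : ρ < 2) (hρ1 : ρ ≠ 1)
    (ξ : E3) (hξ : ξ ∈ Metric.sphere (0 : E3) 1) (hξcap : 1 - ⟪ξ, ζ⟫ < ρ) :
    0 < scalFact ζ ξ ρ ∧
    ‖reflPt ζ ξ ρ‖ = 1 ∧
    ρ < 1 - ⟪reflPt ζ ξ ρ, ζ⟫ ∧
    ∀ η : E3, η ∈ Metric.sphere (0 : E3) 1 → ⟪ζ, η⟫ = 1 - ρ →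
      (1 - ⟪ξ, η⟫ = scalFact ζ ξ ρ * (1 - ⟪reflPt ζ ξ ρ, η⟫) ∧
        (1 / (4 * π)) * Real.log (1 - ⟪ξ, η⟫) -
          (1 / (4 * π)) * Real.log (scalFact ζ ξ ρ * (1 - ⟪reflPt ζ ξ ρ, η⟫)) = 0) := by
  have hζn : ‖ζ‖ = 1 := by simpa using hζ
  have hξn : ‖ξ‖ = 1 := by simpa using hξ
  set t : ℝ := ⟪ξ, ζ⟫ with ht
  have hζζ : ⟪ζ, ζ⟫ = 1 := by
    rw [real_inner_self_eq_norm_sq, hζn]; norm_num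
  have hξξ : ⟪ξ, ξ⟫ = 1 := by
    rw [real_inner_self_eq_norm_sq, hξn]; norm_num
  have hζξ : ⟪ζ, ξ⟫ = t := (real_inner_comm ζ ξ).symm
  have htle : t ≤ 1 := by
    have := real_inner_le_norm ξ ζ
    rwa [hξn, hζn, mul_one] at this
  set r : ℝ := scalFact ζ ξ ρ with hrdef
  have hρ1' : ρ - 1 ≠ 0 := sub_ne_zero.mpr hρ1
  have hρ2' : (0:ℝ) < 2 - ρ := by linarith
  have hN : 0 < 1 + 2 * t * (ρ - 1) + (ρ - 1) ^ 2 := by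
    nlinarith [sq_nonneg (ρ - 1), mul_pos hρ0 hρ2']
  have hr : r = (1 + 2 * t * (ρ - 1) + (ρ - 1) ^ 2) / (ρ * (2 - ρ)) := by
    rw [hrdef]; unfold scalFact; rw [← ht]
    rw [show ρ * (2 - ρ) = -(ρ * (ρ - 2)) by ring, div_neg]
  have hrpos : 0 < r := by
    rw [hr]; exact div_pos hN (mul_pos hρ0 hρ2')
  have hrne : r ≠ 0 := ne_of_gt hrpos
  have hρne : ρ ≠ 0 := ne_of_gt hρ0
  have hρ2ne : (2:ℝ) - ρ ≠ 0 := ne_of_gt hρ2'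
  -- inner products with reflPt
  have hinner : ∀ η : E3, ⟪reflPt ζ ξ ρ, η⟫ =
      r⁻¹ * ⟪ξ, η⟫ - ((r - 1) / (r * (ρ - 1))) * ⟪ζ, η⟫ := by
    intro η
    unfold reflPt
    rw [inner_sub_left, real_inner_smul_left, real_inner_smul_left, ← hrdef]
  have hinner' : ∀ η : E3, ⟪η, reflPt ζ ξ ρ⟫ =
      r⁻¹ * ⟪η, ξ⟫ - ((r - 1) / (r * (ρ - 1))) * ⟪η, ζ⟫ := by
    intro η
    unfold reflPt
    rw [inner_sub_right, real_inner_smul_right, real_inner_smul_right, ← hrdef]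
  refine ⟨hrpos, ?_, ?_, ?_⟩
  · -- norm of reflPt = 1
    have hsq : ⟪reflPt ζ ξ ρ, reflPt ζ ξ ρ⟫ = 1 := by
      rw [hinner, hinner' ξ, hinner' ζ, hξξ, hζζ, hζξ, ← ht, hr]
      field_simp
      ring
    have hn2 : ‖reflPt ζ ξ ρ‖ ^ 2 = 1 := by rw [← real_inner_self_eq_norm_sq, hsq]
    nlinarith [norm_nonneg (reflPt ζ ξ ρ)]
  · -- outside the cap
    have h1 : 1 - ⟪reflPt ζ ξ ρ, ζ⟫ - ρ = (t + ρ - 1) / r := by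
      rw [hinner, hζζ, ← ht, hr]
      field_simp
      ring
    have h2 : 0 < (t + ρ - 1) / r := div_pos (by linarith) hrpos
    linarith [h1 ▸ h2]
  · intro η hη hζη
    have key : 1 - ⟪ξ, η⟫ = r * (1 - ⟪reflPt ζ ξ ρ, η⟫) := by
      rw [hinner, hζη]
      field_simp
      ring
    exact ⟨key, by rw [← key]; ring⟩

end
end

section
/- Poisson kernel identity for the spherical cap: Let ζ ∈ S², ρ ∈ (0,2) with ρ ≠ 1, let ξ ∈ S² satisfy 1 − ξ·ζ < ρ, and let ř, ξ̌ be the scaling factor and reflection point of ξ. Then for every η ∈ S² with ζ·η = 1 − ρ: (ζ − (1−ρ)η) · ( (ξ − (ξ·η)η)/(1 − ξ·η) − (ξ̌ − (ξ̌·η)η)/(1 − ξ̌·η) ) = 2(ξ·ζ + ρ − 1)/(1 − ξ·η). (Equivalently, the outward normal derivative in η of the Dirichlet Green function G_D(ξ,η) = (1/(4π))log(1−ξ·η) − (1/(4π))log(ř(1−ξ̌·η)) at a boundary point η equals the Poisson kernel (1/(2π))·(ξ·ζ + ρ − 1)/(√(ρ(2−ρ))·(1 − ξ·η)) of the cap.)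 -/
open Real
open scoped RealInnerProductSpace

noncomputable section

set_option maxHeartbeats 1600000 in
/-- Poisson kernel identity for the spherical cap: the outward normal
derivative of the Dirichlet Green function equals the Poisson kernel of the cap. -/
theorem poisson_kernel_identity (ζ : E3) (hζ : ζ ∈ Metric.sphere (0 : E3) 1)
    (ρ : ℝ) (hρ0 : 0 < ρ) (hρ2 : ρ < 2) (hρ1 : ρ ≠ 1)
    (ξ : E3) (hξ : ξ ∈ Metric.sphere (0 : E3) 1) (hξcap : 1 - ⟪ξ, ζ⟫ < ρ) :
    ∀ η : E3, η ∈ Metric.sphere (0 : E3) 1 → ⟪ζ, η⟫ = 1 - ρ →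
      ⟪ζ - (1 - ρ) • η,
        (1 - ⟪ξ, η⟫)⁻¹ • (ξ - ⟪ξ, η⟫ • η) -
          (1 - ⟪reflPt ζ ξ ρ, η⟫)⁻¹ • (reflPt ζ ξ ρ - ⟪reflPt ζ ξ ρ, η⟫ • η)⟫ =
        2 * (⟪ξ, ζ⟫ + ρ - 1) / (1 - ⟪ξ, η⟫) := by
  intro η hη hζη
  rw [Metric.mem_sphere, dist_zero_right] at hζ hξ hη
  have hζζ : ⟪ζ, ζ⟫ = 1 := by rw [real_inner_self_eq_norm_sq, hζ]; norm_num
  have hξξ : ⟪ξ, ξ⟫ = 1 := by rw [real_inner_self_eq_norm_sq, hξ]; norm_num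
  have hηη : ⟪η, η⟫ = 1 := by rw [real_inner_self_eq_norm_sq, hη]; norm_num
  set a : ℝ := ⟪ξ, ζ⟫ with ha
  set b : ℝ := ⟪ξ, η⟫ with hb
  have hζξ : ⟪ζ, ξ⟫ = a := (real_inner_comm ζ ξ).symm
  have hηξ : ⟪η, ξ⟫ = b := (real_inner_comm η ξ).symm
  have hηζ : ⟪η, ζ⟫ = 1 - ρ := by rw [real_inner_comm]; exact hζη
  have ha1 : a ≤ 1 := by
    have := real_inner_le_norm ξ ζ
    rw [hξ, hζ] at this; simpa using this
  have ha2 : -1 ≤ a := by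
    have := real_inner_le_norm (-ξ) ζ
    rw [norm_neg, hξ, hζ, inner_neg_left] at this; linarith
  have hρ1' : ρ - 1 ≠ 0 := sub_ne_zero.mpr hρ1
  have hρ0' : ρ ≠ 0 := ne_of_gt hρ0
  have hρ2' : ρ - 2 ≠ 0 := by intro h; linarith [sub_eq_zero.mp h]
  set r : ℝ := scalFact ζ ξ ρ with hrdef
  have hrval : r = -((1 + 2 * a * (ρ - 1) + (ρ - 1) ^ 2) / (ρ * (ρ - 2))) := rfl
  have hnum : 0 < 1 + 2 * a * (ρ - 1) + (ρ - 1) ^ 2 := by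
    rcases le_total ρ 1 with h | h
    · nlinarith [mul_nonneg (by linarith : (0:ℝ) ≤ 1 - a) (by linarith : (0:ℝ) ≤ 1 - ρ)]
    · nlinarith [mul_nonneg (by linarith : (0:ℝ) ≤ 1 + a) (by linarith : (0:ℝ) ≤ ρ - 1)]
  have hr : r ≠ 0 := by
    rw [hrval]
    intro h
    have := neg_eq_zero.mp h
    rw [div_eq_zero_iff] at this
    rcases this with h' | h'
    · linarith
    · exact (mul_ne_zero hρ0' hρ2') h'
  have hb1 : b ≠ 1 := by
    intro h
    have hxeq : ξ = η := by
      have : ‖ξ - η‖ ^ 2 = 0 := by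
        rw [← real_inner_self_eq_norm_sq, inner_sub_sub_self, hξξ, hηη, hηξ, ← hb, h]
        ring
      have := pow_eq_zero_iff (n := 2) (by norm_num) |>.mp this
      exact sub_eq_zero.mp (norm_eq_zero.mp this)
    have : a = 1 - ρ := by rw [ha, hxeq]; exact hηζ
    linarith
  have h1b : 1 - b ≠ 0 := fun h => hb1 (by linarith [sub_eq_zero.mp h])
  -- inner products involving the reflection point
  have hrη : ⟪reflPt ζ ξ ρ, η⟫ = (b + r - 1) / r := by
    rw [reflPt, inner_sub_left, real_inner_smul_left, real_inner_smul_left,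
      ← hrdef, ← hb, hζη]
    field_simp
    ring
  have hrrefl : 1 - ⟪reflPt ζ ξ ρ, η⟫ = (1 - b) / r := by
    rw [hrη]; field_simp; ring
  have hNη : ⟪ζ - (1 - ρ) • η, η⟫ = 0 := by
    rw [inner_sub_left, real_inner_smul_left, hζη, hηη]; ring
  have hNξ : ⟪ζ - (1 - ρ) • η, ξ⟫ = a - (1 - ρ) * b := by
    rw [inner_sub_left, real_inner_smul_left, hζξ, hηξ]
  have hNr : ⟪ζ - (1 - ρ) • η, reflPt ζ ξ ρ⟫ =
      r⁻¹ * a - (r - 1) / (r * (ρ - 1)) - (1 - ρ) * ((b + r - 1) / r) := by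
    rw [inner_sub_left, real_inner_smul_left, real_inner_comm (reflPt ζ ξ ρ) η, hrη,
      reflPt, inner_sub_right, real_inner_smul_right, real_inner_smul_right,
      ← hrdef, hζξ, hζζ]
    ring
  set n : ℝ := 1 + 2 * a * (ρ - 1) + (ρ - 1) ^ 2 with hn
  have hnne : n ≠ 0 := ne_of_gt hnum
  have hrvaln : r = -(n / (ρ * (ρ - 2))) := hrval
  have key : (a - (1 - ρ) * b) -
      r * (r⁻¹ * a - (r - 1) / (r * (ρ - 1)) - (1 - ρ) * ((b + r - 1) / r)) =
      2 * (a + ρ - 1) := by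
    have e1 : r * (r⁻¹ * a - (r - 1) / (r * (ρ - 1)) - (1 - ρ) * ((b + r - 1) / r)) =
        a - (r - 1) / (ρ - 1) - (1 - ρ) * (b + r - 1) := by
      field_simp
    rw [e1, hrvaln]
    rw [hn]
    field_simp
    ring
  rw [inner_sub_right, real_inner_smul_right, real_inner_smul_right,
    inner_sub_right, inner_sub_right, real_inner_smul_right, real_inner_smul_right,
    hNξ, hNη, hNr, hrrefl, mul_zero, sub_zero, mul_zero, sub_zero, inv_div]
  calc (1 - b)⁻¹ * (a - (1 - ρ) * b) -
        r / (1 - b) * (r⁻¹ * a - (r - 1) / (r * (ρ - 1)) - (1 - ρ) * ((b + r - 1) / r))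
      = ((a - (1 - ρ) * b) -
          r * (r⁻¹ * a - (r - 1) / (r * (ρ - 1)) - (1 - ρ) * ((b + r - 1) / r))) / (1 - b) := by
        ring
    _ = 2 * (a + ρ - 1) / (1 - b) := by rw [key]
end
end

section
/- Neumann boundary identity for the spherical cap: Let ζ ∈ S², ρ ∈ (0,2) with ρ ≠ 1, let ξ ∈ S² satisfy 1 − ξ·ζ < ρ, and let ř, ξ̌ be the scaling factor and reflection point of ξ. Then for every η ∈ S² with ζ·η = 1 − ρ: (ζ − (1−ρ)η) · ( (ξ − (ξ·η)η)/(1 − ξ·η) + (ξ̌ − (ξ̌·η)η)/(1 − ξ̌·η) ) = 2(1 − ρ). (Equivalently, the Neumann Green function of the cap, G_N(ξ,η) = (1/(4π))log(1−ξ·η) + (1/(4π))log(ř(1−ξ̌·η)) + ((1−ρ)/(2πρ))log(1+ζ·η), has vanishing outward normal derivative in η at every boundary point of Γ_ρ(ζ).) -/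
/-! With `c = 1 - ρ`, pairing the conormal `ζ - c η` with the tangential part `x - (x·η) η` of
any `x` gives `x·ζ - c (x·η)`. Since `1 - ξ̌·η = (1 - ξ·η)/ř` and
`(ř - 1) ρ (2 - ρ) = 2c (c - ξ·ζ)`, the Kelvin term contributes exactly `2c` minus the direct
term. -/

open Real
open scoped RealInnerProductSpace

noncomputable section

section Tangential

variable {F : Type*} [NormedAddCommGroup F] [InnerProductSpace ℝ F]

theorem inner_sub_smul_tangential {ζ η : F} {c : ℝ} (hη : ⟪η, η⟫ = 1) (hζη : ⟪ζ, η⟫ = c)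
    (x : F) : ⟪ζ - c • η, x - ⟪x, η⟫ • η⟫ = ⟪x, ζ⟫ - c * ⟪x, η⟫ := by
  simp only [inner_sub_left, inner_sub_right, real_inner_smul_left, real_inner_smul_right,
    hη, hζη, real_inner_comm η x, real_inner_comm ζ x]
  ring

theorem inner_ne_one_of_inner_ne {ξ η ζ : F} (hξ : ‖ξ‖ = 1) (hη : ‖η‖ = 1)
    (h : ⟪ξ, ζ⟫ ≠ ⟪η, ζ⟫) : ⟪ξ, η⟫ ≠ 1 := fun h1 =>
  h (by rw [(inner_eq_one_iff_of_norm_eq_one hξ hη).mp h1])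

end Tangential

section Reflection

variable {ζ ξ η : E3} {ρ : ℝ}

theorem scalFact_pos (hζ : ‖ζ‖ = 1) (hξ : ‖ξ‖ = 1) (hρ0 : 0 < ρ) (hρ2 : ρ < 2) :
    0 < scalFact ζ ξ ρ := by
  have ha : |⟪ξ, ζ⟫| ≤ 1 := by simpa [hξ, hζ] using abs_real_inner_le_norm ξ ζ
  obtain ⟨ha₁, ha₂⟩ := abs_le.mp ha
  have hnum : 0 < 1 + 2 * ⟪ξ, ζ⟫ * (ρ - 1) + (ρ - 1) ^ 2 := by
    nlinarith [mul_nonneg (by linarith : (0 : ℝ) ≤ 1 + ⟪ξ, ζ⟫) (sq_nonneg ρ),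
      mul_nonneg (by linarith : (0 : ℝ) ≤ 1 - ⟪ξ, ζ⟫) (sq_nonneg (2 - ρ)), mul_pos hρ0 hρ0,
      mul_pos (by linarith : (0 : ℝ) < 2 - ρ) (by linarith : (0 : ℝ) < 2 - ρ)]
  have hden : ρ * (ρ - 2) < 0 := mul_neg_of_pos_of_neg hρ0 (by linarith)
  rw [scalFact, ← div_neg]
  exact div_pos hnum (neg_pos.mpr hden)

theorem scalFact_sub_one_mul (hρ0 : ρ ≠ 0) (hρ2 : ρ ≠ 2) :
    (scalFact ζ ξ ρ - 1) * (ρ * (2 - ρ)) = 2 * (1 - ρ) * (1 - ρ - ⟪ξ, ζ⟫) := by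
  have : ρ - 2 ≠ 0 := sub_ne_zero.mpr hρ2
  rw [scalFact]
  field_simp
  ring

theorem one_sub_inner_reflPt (hr : scalFact ζ ξ ρ ≠ 0) (hρ1 : ρ ≠ 1) (hζη : ⟪ζ, η⟫ = 1 - ρ) :
    1 - ⟪reflPt ζ ξ ρ, η⟫ = (1 - ⟪ξ, η⟫) / scalFact ζ ξ ρ := by
  have : ρ - 1 ≠ 0 := sub_ne_zero.mpr hρ1
  simp only [reflPt, inner_sub_left, real_inner_smul_left, hζη]
  field_simp
  ring

theorem inner_reflPt_conormal (hζ : ⟪ζ, ζ⟫ = 1) (hr : scalFact ζ ξ ρ ≠ 0) (hρ0 : ρ ≠ 0)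
    (hρ1 : ρ ≠ 1) (hρ2 : ρ ≠ 2) (hζη : ⟪ζ, η⟫ = 1 - ρ) :
    ⟪reflPt ζ ξ ρ, ζ⟫ - (1 - ρ) * ⟪reflPt ζ ξ ρ, η⟫ =
      (2 * (1 - ρ) * (1 - ⟪ξ, η⟫) - (⟪ξ, ζ⟫ - (1 - ρ) * ⟪ξ, η⟫)) / scalFact ζ ξ ρ := by
  have h1 : ρ - 1 ≠ 0 := sub_ne_zero.mpr hρ1
  have h2 : 2 - ρ ≠ 0 := sub_ne_zero.mpr hρ2.symm
  have key := scalFact_sub_one_mul (ζ := ζ) (ξ := ξ) hρ0 hρ2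
  simp only [reflPt, inner_sub_left, real_inner_smul_left, hζ, hζη]
  field_simp
  linear_combination -key

end Reflection

/-- Neumann boundary identity for the spherical cap: the Neumann Green
function of the cap has vanishing outward normal derivative at the boundary. -/
theorem neumann_boundary_identity (ζ : E3) (hζ : ζ ∈ Metric.sphere (0 : E3) 1)
    (ρ : ℝ) (hρ0 : 0 < ρ) (hρ2 : ρ < 2) (hρ1 : ρ ≠ 1)
    (ξ : E3) (hξ : ξ ∈ Metric.sphere (0 : E3) 1) (hξcap : 1 - ⟪ξ, ζ⟫ < ρ) :
    ∀ η : E3, η ∈ Metric.sphere (0 : E3) 1 → ⟪ζ, η⟫ = 1 - ρ →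
      ⟪ζ - (1 - ρ) • η,
        (1 - ⟪ξ, η⟫)⁻¹ • (ξ - ⟪ξ, η⟫ • η) +
          (1 - ⟪reflPt ζ ξ ρ, η⟫)⁻¹ • (reflPt ζ ξ ρ - ⟪reflPt ζ ξ ρ, η⟫ • η)⟫ =
        2 * (1 - ρ) := by
  intro η hη hζη
  rw [mem_sphere_zero_iff_norm] at hζ hξ hη
  have hηη : ⟪η, η⟫ = 1 := by simp [hη]
  have hζζ : ⟪ζ, ζ⟫ = 1 := by simp [hζ]
  have hr := (scalFact_pos hζ hξ hρ0 hρ2).ne'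
  have hξη : ⟪ξ, ζ⟫ ≠ ⟪η, ζ⟫ := by
    rw [← real_inner_comm η ζ, hζη]
    exact ne_of_gt (by linarith)
  have hb : 1 - ⟪ξ, η⟫ ≠ 0 := sub_ne_zero.mpr (inner_ne_one_of_inner_ne hξ hη hξη).symm
  rw [inner_add_right, inner_smul_right, inner_smul_right,
    inner_sub_smul_tangential hηη hζη, inner_sub_smul_tangential hηη hζη,
    one_sub_inner_reflPt hr hρ1 hζη,
    inner_reflPt_conormal hζζ hr hρ0.ne' hρ1 hρ2.ne hζη]
  field_simp
  ring
end
end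

section
/- Solid-angle values of the double-layer kernel on a spherical cap: Let ζ ∈ S², ρ ∈ (0,2), let e₁, e₂ be an orthonormal pair perpendicular to ζ, and set c(θ) = (1−ρ)ζ + √(ρ(2−ρ))·(cos θ · e₁ + sin θ · e₂). For ξ ∈ S² define I(ξ) = (1/(4π))·∫₀^{2π} (ζ − (1−ρ)c(θ)) · (ξ − (ξ·c(θ))c(θ)) / (1 − ξ·c(θ)) dθ. Then I(ξ) = 1 − ρ/2 whenever 1 − ξ·ζ < ρ, and I(ξ) = −ρ/2 whenever 1 − ξ·ζ > ρ. (I(ξ) is the arc-length integral over the boundary circle of the cap of the outward normal derivative of the fundamental solution η ↦ G(ξ·η); since the area of Γ_ρ(ζ) equals 2πρ, these values equal 1 − ‖Γ‖/(4π) inside and −‖Γ‖/(4π) outside, exhibiting the jump across the boundary.) -/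
open MeasureTheory Real intervalIntegral
open scoped RealInnerProductSpace

noncomputable section

/-!
Write `a = ξ·ζ`, `bᵢ = ξ·eᵢ`, `t = 1 - ρ` and `s = √(ρ(2-ρ))`, so that `t² + s² = 1`. Every point
`c` of the boundary circle is a unit vector with `ζ·c = t`, which makes the numerator of the
kernel `a - t (ξ·c)` and the integrand `t + (a - t) / (1 - ξ·c)`, where
`1 - ξ·c = A - B₁ cos θ - B₂ sin θ` with `A = 1 - t a`, `Bᵢ = s bᵢ`. Parseval for the orthonormal
basis `ζ, e₁, e₂` gives `A² - B₁² - B₂² = (a - t)²`, and the classical integral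
`∫₀^{2π} dθ / (A - B₁ cos θ - B₂ sin θ) = 2π / √(A² - B₁² - B₂²)` then yields
`I = (t + sign (a - t)) / 2`.
-/

section TrigIntegral

variable {A B₁ B₂ r : ℝ}

lemma sq_mul_cos_add_mul_sin_le (B₁ B₂ θ : ℝ) :
    (B₁ * cos θ + B₂ * sin θ) ^ 2 ≤ B₁ ^ 2 + B₂ ^ 2 := by
  nlinarith [sin_sq_add_cos_sq θ, sq_nonneg (B₁ * sin θ - B₂ * cos θ)]

lemma sub_mul_cos_sub_mul_sin_pos (hA : 0 < A) (hB : B₁ ^ 2 + B₂ ^ 2 < A ^ 2) (θ : ℝ) :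
    0 < A - B₁ * cos θ - B₂ * sin θ := by
  obtain ⟨-, hlt⟩ := abs_lt_of_sq_lt_sq' ((sq_mul_cos_add_mul_sin_le B₁ B₂ θ).trans_lt hB) hA.le
  linarith

/-- A global antiderivative of `θ ↦ (A - B₁ cos θ - B₂ sin θ)⁻¹`: unlike the usual
`tan (θ / 2)` substitution, the arctangent here never crosses a branch cut. -/
lemma hasDerivAt_inv_sub_mul_cos_sub_mul_sin_primitive (hA : 0 < A) (hr : 0 < r)
    (hrB : r ^ 2 + B₁ ^ 2 + B₂ ^ 2 = A ^ 2) (θ : ℝ) :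
    HasDerivAt (fun θ => (θ + 2 * arctan ((B₁ * sin θ - B₂ * cos θ) /
        (A + r - B₁ * cos θ - B₂ * sin θ))) / r)
      (A - B₁ * cos θ - B₂ * sin θ)⁻¹ θ := by
  have hw : HasDerivAt (fun θ => B₁ * sin θ - B₂ * cos θ) (B₁ * cos θ + B₂ * sin θ) θ :=
    (((hasDerivAt_sin θ).const_mul B₁).sub ((hasDerivAt_cos θ).const_mul B₂)).congr_deriv
      (by ring)
  have hD : HasDerivAt (fun θ => A + r - B₁ * cos θ - B₂ * sin θ)
      (B₁ * sin θ - B₂ * cos θ) θ :=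
    (((hasDerivAt_const θ (A + r)).sub ((hasDerivAt_cos θ).const_mul B₁)).sub
      ((hasDerivAt_sin θ).const_mul B₂)).congr_deriv (by ring)
  have hB : B₁ ^ 2 + B₂ ^ 2 < A ^ 2 := by linarith [pow_pos hr 2]
  have hAu : 0 < A - (B₁ * cos θ + B₂ * sin θ) := by
    linarith [sub_mul_cos_sub_mul_sin_pos hA hB θ]
  have hD0 : A + r - (B₁ * cos θ + B₂ * sin θ) ≠ 0 := by linarith
  refine (((hasDerivAt_id θ).add (((hw.div hD (by linarith)).arctan).const_mul 2)).div_const r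
    ).congr_deriv ?_
  simp only [Pi.div_apply]
  rw [show A + r - B₁ * cos θ - B₂ * sin θ = A + r - (B₁ * cos θ + B₂ * sin θ) by ring,
    show A - B₁ * cos θ - B₂ * sin θ = A - (B₁ * cos θ + B₂ * sin θ) by ring]
  set u := B₁ * cos θ + B₂ * sin θ
  set w := B₁ * sin θ - B₂ * cos θ
  have huw : u ^ 2 + w ^ 2 + r ^ 2 = A ^ 2 := by
    linear_combination (B₁ ^ 2 + B₂ ^ 2) * cos_sq_add_sin_sq θ + hrB
  have hq : 1 + (w / (A + r - u)) ^ 2 = 2 * (A + r) * (A - u) / (A + r - u) ^ 2 := by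
    field_simp
    linear_combination huw
  rw [hq]
  field_simp
  linear_combination (-1) * huw

lemma continuous_inv_sub_mul_cos_sub_mul_sin (hA : 0 < A) (hB : B₁ ^ 2 + B₂ ^ 2 < A ^ 2) :
    Continuous fun θ => (A - B₁ * cos θ - B₂ * sin θ)⁻¹ :=
  Continuous.inv₀ (by fun_prop) fun θ => (sub_mul_cos_sub_mul_sin_pos hA hB θ).ne'

lemma integral_inv_sub_mul_cos_sub_mul_sin (hA : 0 < A) (hr : 0 < r)
    (hrB : r ^ 2 + B₁ ^ 2 + B₂ ^ 2 = A ^ 2) :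
    ∫ θ in (0 : ℝ)..2 * π, (A - B₁ * cos θ - B₂ * sin θ)⁻¹ = 2 * π / r := by
  rw [integral_eq_sub_of_hasDerivAt
    (fun θ _ => hasDerivAt_inv_sub_mul_cos_sub_mul_sin_primitive hA hr hrB θ)
    ((continuous_inv_sub_mul_cos_sub_mul_sin hA (by linarith [pow_pos hr 2])).intervalIntegrable
      _ _)]
  simp only [sin_two_pi, cos_two_pi, sin_zero, cos_zero]
  ring

end TrigIntegral

section InnerProductGeometry

variable {E : Type*} [NormedAddCommGroup E] [InnerProductSpace ℝ E]

theorem Orthonormal.sum_sq_inner_eq_norm_sq {ι : Type*} [Fintype ι] [FiniteDimensional ℝ E]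
    {v : ι → E} (hv : Orthonormal ℝ v) (hcard : Fintype.card ι = Module.finrank ℝ E) (x : E) :
    ∑ i, ⟪x, v i⟫ ^ 2 = ‖x‖ ^ 2 := by
  simpa using (OrthonormalBasis.mk hv
    (hv.linearIndependent.span_eq_top_of_card_eq_finrank' hcard).ge).sum_sq_inner_left x

lemma inner_sub_smul_sub_inner_smul {ζ ξ c : E} {t : ℝ} (hc : ‖c‖ = 1) (hζc : ⟪ζ, c⟫ = t) :
    ⟪ζ - t • c, ξ - ⟪ξ, c⟫ • c⟫ = ⟪ξ, ζ⟫ - t * ⟪ξ, c⟫ := by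
  have hcc : ⟪c, c⟫ = 1 := by rw [real_inner_self_eq_norm_sq, hc, one_pow]
  simp only [inner_sub_left, inner_sub_right, real_inner_smul_left, real_inner_smul_right,
    hζc, hcc, real_inner_comm ξ ζ, real_inner_comm ξ c]
  ring

def capBoundary (ζ e₁ e₂ : E) (t s θ : ℝ) : E := t • ζ + s • (cos θ • e₁ + sin θ • e₂)

lemma inner_capBoundary (x ζ e₁ e₂ : E) (t s θ : ℝ) :
    ⟪x, capBoundary ζ e₁ e₂ t s θ⟫ = t * ⟪x, ζ⟫ + s * (cos θ * ⟪x, e₁⟫ + sin θ * ⟪x, e₂⟫) := by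
  simp only [capBoundary, inner_add_right, real_inner_smul_right]

variable {ζ e₁ e₂ : E}

lemma inner_center_capBoundary (hζ : ‖ζ‖ = 1) (hζe₁ : ⟪ζ, e₁⟫ = 0) (hζe₂ : ⟪ζ, e₂⟫ = 0)
    (t s θ : ℝ) : ⟪ζ, capBoundary ζ e₁ e₂ t s θ⟫ = t := by
  rw [inner_capBoundary, real_inner_self_eq_norm_sq, hζ, hζe₁, hζe₂]
  ring

lemma norm_capBoundary (hζ : ‖ζ‖ = 1) (he₁ : ‖e₁‖ = 1) (he₂ : ‖e₂‖ = 1)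
    (he₁e₂ : ⟪e₁, e₂⟫ = 0) (hζe₁ : ⟪ζ, e₁⟫ = 0) (hζe₂ : ⟪ζ, e₂⟫ = 0) {t s : ℝ}
    (hts : t ^ 2 + s ^ 2 = 1) (θ : ℝ) : ‖capBoundary ζ e₁ e₂ t s θ‖ = 1 := by
  rw [← pow_eq_one_iff_of_nonneg (norm_nonneg _) two_ne_zero, ← real_inner_self_eq_norm_sq,
    inner_capBoundary]
  simp only [capBoundary, inner_add_left, real_inner_smul_left, real_inner_self_eq_norm_sq, hζ,
    he₁, he₂, he₁e₂, hζe₁, hζe₂, real_inner_comm ζ e₁, real_inner_comm ζ e₂,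
    real_inner_comm e₁ e₂]
  linear_combination s ^ 2 * cos_sq_add_sin_sq θ + hts

lemma orthonormal_vecCons_three (hζ : ‖ζ‖ = 1) (he₁ : ‖e₁‖ = 1) (he₂ : ‖e₂‖ = 1)
    (he₁e₂ : ⟪e₁, e₂⟫ = 0) (hζe₁ : ⟪ζ, e₁⟫ = 0) (hζe₂ : ⟪ζ, e₂⟫ = 0) :
    Orthonormal ℝ ![ζ, e₁, e₂] := by
  rw [orthonormal_iff_ite]
  intro i j
  fin_cases i <;> fin_cases j <;>
    simp [hζ, he₁, he₂, he₁e₂, hζe₁, hζe₂, real_inner_comm ζ e₁,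
      real_inner_comm ζ e₂, real_inner_comm e₁ e₂]

end InnerProductGeometry

lemma integral_div_one_sub_of_sq_add_sq {a b₁ b₂ t s : ℝ} (hab : a ^ 2 + b₁ ^ 2 + b₂ ^ 2 = 1)
    (hts : t ^ 2 + s ^ 2 = 1) (hat : a ≠ t) :
    ∫ θ in (0 : ℝ)..2 * π, (a - t * (t * a + s * (cos θ * b₁ + sin θ * b₂))) /
        (1 - (t * a + s * (cos θ * b₁ + sin θ * b₂))) =
      2 * π * (t + (a - t) / |a - t|) := by
  have hr : 0 < |a - t| := abs_pos.mpr (sub_ne_zero.mpr hat)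
  have hrB : |a - t| ^ 2 + (s * b₁) ^ 2 + (s * b₂) ^ 2 = (1 - t * a) ^ 2 := by
    rw [sq_abs]
    linear_combination (1 - a ^ 2) * hts + s ^ 2 * hab
  have hA : 0 < 1 - t * a := by
    nlinarith [sq_nonneg b₁, sq_nonneg b₂, sq_nonneg s, pow_pos hr 2, sq_abs (a - t)]
  have hB : (s * b₁) ^ 2 + (s * b₂) ^ 2 < (1 - t * a) ^ 2 := by linarith [pow_pos hr 2]
  have hintegrand : ∀ θ : ℝ, (a - t * (t * a + s * (cos θ * b₁ + sin θ * b₂))) /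
        (1 - (t * a + s * (cos θ * b₁ + sin θ * b₂))) =
      t + (a - t) * (1 - t * a - s * b₁ * cos θ - s * b₂ * sin θ)⁻¹ := by
    intro θ
    have hD := (sub_mul_cos_sub_mul_sin_pos hA hB θ).ne'
    rw [show 1 - (t * a + s * (cos θ * b₁ + sin θ * b₂)) =
      1 - t * a - s * b₁ * cos θ - s * b₂ * sin θ by ring, div_eq_iff hD, add_mul,
      inv_mul_cancel_right₀ hD]
    ring
  simp_rw [hintegrand]
  rw [intervalIntegral.integral_add intervalIntegrable_const
    (((continuous_inv_sub_mul_cos_sub_mul_sin hA hB).intervalIntegrable _ _).const_mul _),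
    intervalIntegral.integral_const_mul, integral_inv_sub_mul_cos_sub_mul_sin hA hr hrB,
    intervalIntegral.integral_const]
  simp only [sub_zero, smul_eq_mul]
  ring

/-- Solid-angle values of the double-layer kernel on a spherical cap:
the arc-length integral over the boundary circle of the cap of the outward normal
derivative of the fundamental solution η ↦ G(ξ·η) equals 1 − ρ/2 inside the cap and
−ρ/2 outside the closed cap. -/
theorem double_layer_kernel_solid_angle (ζ : E3) (hζ : ζ ∈ Metric.sphere (0 : E3) 1)
    (ρ : ℝ) (hρ0 : 0 < ρ) (hρ2 : ρ < 2)
    (e₁ e₂ : E3) (he₁ : ‖e₁‖ = 1) (he₂ : ‖e₂‖ = 1) (he₁e₂ : ⟪e₁, e₂⟫ = 0)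
    (hζe₁ : ⟪ζ, e₁⟫ = 0) (hζe₂ : ⟪ζ, e₂⟫ = 0)
    (c : ℝ → E3)
    (hc : ∀ θ : ℝ, c θ = (1 - ρ) • ζ + Real.sqrt (ρ * (2 - ρ)) •
      (Real.cos θ • e₁ + Real.sin θ • e₂))
    (ξ : E3) (hξ : ξ ∈ Metric.sphere (0 : E3) 1)
    (I : ℝ)
    (hI : I = (1 / (4 * π)) * ∫ θ in (0:ℝ)..(2 * π),
      ⟪ζ - (1 - ρ) • c θ, ξ - ⟪ξ, c θ⟫ • c θ⟫ / (1 - ⟪ξ, c θ⟫)) :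
    (1 - ⟪ξ, ζ⟫ < ρ → I = 1 - ρ / 2) ∧ (ρ < 1 - ⟪ξ, ζ⟫ → I = -(ρ / 2)) := by
  rw [mem_sphere_zero_iff_norm] at hζ hξ
  set t := 1 - ρ
  set s := √(ρ * (2 - ρ))
  have hts : t ^ 2 + s ^ 2 = 1 := by
    rw [sq_sqrt (by nlinarith)]
    ring
  have hab : ⟪ξ, ζ⟫ ^ 2 + ⟪ξ, e₁⟫ ^ 2 + ⟪ξ, e₂⟫ ^ 2 = 1 := by
    simpa [Fin.sum_univ_three, hξ, add_assoc] using
      (orthonormal_vecCons_three hζ he₁ he₂ he₁e₂ hζe₁ hζe₂).sum_sq_inner_eq_norm_sq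
        (by simp) ξ
  obtain rfl : c = capBoundary ζ e₁ e₂ t s := funext hc
  have hnumerator θ := inner_sub_smul_sub_inner_smul (ξ := ξ)
    (norm_capBoundary hζ he₁ he₂ he₁e₂ hζe₁ hζe₂ hts θ)
    (inner_center_capBoundary hζ hζe₁ hζe₂ t s θ)
  simp only [hnumerator] at hI
  simp only [inner_capBoundary] at hI
  have hIsign : ⟪ξ, ζ⟫ ≠ t → I = (t + (⟪ξ, ζ⟫ - t) / |⟪ξ, ζ⟫ - t|) / 2 := by
    intro hat
    rw [hI, integral_div_one_sub_of_sq_add_sq hab hts hat]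
    field_simp
    ring
  constructor
  · intro hin
    have hat : 0 < ⟪ξ, ζ⟫ - t := by linarith
    rw [hIsign (sub_pos.mp hat).ne', abs_of_pos hat, div_self hat.ne']
    ring
  · intro hout
    have hat : ⟪ξ, ζ⟫ - t < 0 := by linarith
    rw [hIsign (sub_neg.mp hat).ne, abs_of_neg hat, div_neg, div_self hat.ne]
    ring

end
end
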